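/- arXiv:1306.6120 — 7 statements merged into one kernel-verified Lean document; each statement's English description precedes it below -/
import Mathlib

section
/- If T is a triangulation of the infinity-gon (a maximal set of pairwise non-crossing internal arcs) and n is a right-fountain of T (i.e., T contains infinitely many arcs of the form (n,p)), then T also has a left-fountain, i.e., there exists an integer m such that T contains infinitely many arcs of the form (q,m). -/
/-- An internal arc of the infinity-gon: a pair (m,n) of integers with n - m ≥ 2. -/
def IsArc (a : ℤ × ℤ) : Prop := a.1 + 2 ≤ a.2

/-- Two arcs (m,n) and (p,q) cross if m < p < n < q or p < m < q < n. -/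
def Cross (a b : ℤ × ℤ) : Prop :=
  (a.1 < b.1 ∧ b.1 < a.2 ∧ a.2 < b.2) ∨ (b.1 < a.1 ∧ a.1 < b.2 ∧ b.2 < a.2)

/-- A triangulation of the infinity-gon: a maximal set of pairwise non-crossing internal arcs. -/
def IsTriangulation (T : Set (ℤ × ℤ)) : Prop :=
  (∀ a ∈ T, IsArc a) ∧ (∀ a ∈ T, ∀ b ∈ T, ¬ Cross a b) ∧
    (∀ γ, IsArc γ → (∀ a ∈ T, ¬ Cross γ a) → γ ∈ T)

/-- n is a left-fountain of T: infinitely many arcs of T end at n. -/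
def LeftFountain (T : Set (ℤ × ℤ)) (n : ℤ) : Prop := {m : ℤ | (m, n) ∈ T}.Infinite

/-- n is a right-fountain of T: infinitely many arcs of T start at n. -/
def RightFountain (T : Set (ℤ × ℤ)) (n : ℤ) : Prop := {p : ℤ | (n, p) ∈ T}.Infinite

/-!
A right-fountain `n` forces every arc of `T` to stay on one side of `n`: an arc `(e, f)` with
`e < n < f` would cross the arcs `(n, p)` with `p > f`. Suppose no vertex is a left-fountain and
choose `a` so far to the left that no arc `(x, n)` with `x ≤ a` lies in `T`. By maximality each
such missing arc is crossed by an arc of `T`, which must then cover `x` from inside `(-∞, n)`.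
Only finitely many arcs of `T` cover `a` with right end below `n`; a longest one `(c, d)` is
strictly extended by any arc crossing the missing arc `(c, n)`, a contradiction.
-/

theorem RightFountain.exists_gt {T : Set (ℤ × ℤ)} (hT : ∀ a ∈ T, IsArc a) {n : ℤ}
    (hn : RightFountain T n) (b : ℤ) : ∃ p, (n, p) ∈ T ∧ b < p := by
  by_contra h
  push Not at h
  exact hn (BddBelow.finite_of_bddAbove ⟨n + 2, fun p hp => hT _ hp⟩ ⟨b, h⟩)

theorem finite_arcs_ending_in {T : Set (ℤ × ℤ)} (hfin : ∀ m, ¬ LeftFountain T m) {s : Set ℤ}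
    (hs : s.Finite) : {δ ∈ T | δ.2 ∈ s}.Finite := by
  refine (hs.biUnion fun d _ => (Set.not_infinite.mp (hfin d)).image fun c => (c, d)).subset ?_
  rintro ⟨c, d⟩ ⟨hcd, hd⟩
  exact Set.mem_biUnion hd ⟨c, hcd, rfl⟩

namespace IsTriangulation

variable {T : Set (ℤ × ℤ)}

theorem exists_cross_of_notMem (hT : IsTriangulation T) {γ : ℤ × ℤ} (hγ : IsArc γ)
    (hγT : γ ∉ T) : ∃ δ ∈ T, Cross γ δ := by
  by_contra h
  push Not at h
  exact hγT (hT.2.2 γ hγ h)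

theorem le_of_rightFountain (hT : IsTriangulation T) {n : ℤ} (hn : RightFountain T n)
    {δ : ℤ × ℤ} (hδ : δ ∈ T) (hδn : δ.1 < n) : δ.2 ≤ n := by
  by_contra hnδ
  obtain ⟨p, hp, hδp⟩ := hn.exists_gt hT.1 δ.2
  exact hT.2.1 δ hδ _ hp (Or.inl ⟨hδn, by omega, hδp⟩)

theorem exists_cover_of_notMem (hT : IsTriangulation T) {n : ℤ}
    (hsep : ∀ δ ∈ T, δ.1 < n → δ.2 ≤ n) {x : ℤ} (hx : x + 2 ≤ n) (hxn : (x, n) ∉ T) :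
    ∃ δ ∈ T, δ.1 < x ∧ x < δ.2 ∧ δ.2 < n := by
  obtain ⟨δ, hδ, hcross⟩ := hT.exists_cross_of_notMem (γ := (x, n)) hx hxn
  rcases hcross with ⟨hxδ, hδn, hnδ⟩ | ⟨hδx, hxδ, hδn⟩
  · exact absurd (hsep δ hδ hδn) (not_le.mpr hnδ)
  · exact ⟨δ, hδ, hδx, hxδ, hδn⟩

theorem exists_leftFountain_of_separating (hT : IsTriangulation T) {n : ℤ}
    (hsep : ∀ δ ∈ T, δ.1 < n → δ.2 ≤ n) : ∃ m, LeftFountain T m := by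
  by_contra hno
  push Not at hno
  obtain ⟨b, hb⟩ := (Set.not_infinite.mp (hno n)).bddBelow
  set a := min b (n - 2) - 1
  have hmiss : ∀ x ≤ a, (x, n) ∉ T := fun x hx hxT => by
    have := hb hxT
    omega
  set S := {δ ∈ T | δ.1 < a ∧ a < δ.2 ∧ δ.2 < n}
  have hS : S.Finite := (finite_arcs_ending_in hno (Set.finite_Ioo a n)).subset
    fun δ ⟨hδ, _, haδ, hδn⟩ => ⟨hδ, haδ, hδn⟩
  have hSne : S.Nonempty := by
    obtain ⟨δ, hδ, h⟩ := hT.exists_cover_of_notMem hsep (by omega) (hmiss a le_rfl)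
    exact ⟨δ, hδ, h⟩
  obtain ⟨γ, ⟨hγT, hγa, haγ, hγn⟩, hγmax⟩ := hS.exists_maximalFor (fun δ => δ.2 - δ.1) S hSne
  obtain ⟨δ, hδT, hδγ, hγδ, hδn⟩ :=
    hT.exists_cover_of_notMem hsep (by omega) (hmiss γ.1 hγa.le)
  have hγδ₂ : γ.2 ≤ δ.2 := by
    by_contra h
    exact hT.2.1 γ hγT δ hδT (Or.inr ⟨hδγ, hγδ, by omega⟩)
  have : δ.2 - δ.1 ≤ γ.2 - γ.1 := hγmax ⟨hδT, by omega, by omega, hδn⟩ (by dsimp only; omega)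
  omega

end IsTriangulation

theorem stmt1 (T : Set (ℤ × ℤ)) (hT : IsTriangulation T) (n : ℤ)
    (hn : RightFountain T n) : ∃ m : ℤ, LeftFountain T m :=
  hT.exists_leftFountain_of_separating fun _ hδ hδn => hT.le_of_rightFountain hn hδ hδn
end

section
/- Let T be a triangulation of the infinity-gon with a left-fountain m₀ and a right-fountain n₀ satisfying n₀ - m₀ ≥ 2. Then the arc (m₀, n₀) belongs to T. -/
/-! If an arc `a` of `T` crossed `(m₀, n₀)`, it would cross either a long arc `(m, m₀)` of the
left-fountain (when `a` starts left of `m₀`) or a long arc `(n₀, p)` of the right-fountain (when `a`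
ends right of `n₀`); since `T` is non-crossing, no such `a` exists, and maximality puts `(m₀, n₀)`
in `T`. -/

lemma Set.Infinite.exists_lt_of_bddAbove {α : Type*} [LinearOrder α] [LocallyFiniteOrder α]
    {s : Set α} (hs : s.Infinite) (hbdd : BddAbove s) (c : α) : ∃ x ∈ s, x < c :=
  not_bddBelow_iff.1 (fun hb => hs (hb.finite_of_bddAbove hbdd)) c

lemma Set.Infinite.exists_gt_of_bddBelow {α : Type*} [LinearOrder α] [LocallyFiniteOrder α]
    {s : Set α} (hs : s.Infinite) (hbdd : BddBelow s) (c : α) : ∃ x ∈ s, c < x :=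
  not_bddAbove_iff.1 (fun hb => hs (hbdd.finite_of_bddAbove hb)) c

lemma LeftFountain.exists_arc_lt {T : Set (ℤ × ℤ)} (harc : ∀ a ∈ T, IsArc a) {n : ℤ}
    (hl : LeftFountain T n) (c : ℤ) : ∃ m ∈ {m : ℤ | (m, n) ∈ T}, m < c :=
  hl.exists_lt_of_bddAbove ⟨n, fun m hm => by have := harc _ hm; simp only [IsArc] at this; omega⟩ c

lemma RightFountain.exists_arc_gt {T : Set (ℤ × ℤ)} (harc : ∀ a ∈ T, IsArc a) {n : ℤ}
    (hr : RightFountain T n) (c : ℤ) : ∃ p ∈ {p : ℤ | (n, p) ∈ T}, c < p :=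
  hr.exists_gt_of_bddBelow ⟨n, fun p hp => by have := harc _ hp; simp only [IsArc] at this; omega⟩ c

theorem stmt5 (T : Set (ℤ × ℤ)) (hT : IsTriangulation T) (m₀ n₀ : ℤ)
    (hl : LeftFountain T m₀) (hr : RightFountain T n₀) (h : m₀ + 2 ≤ n₀) :
    (m₀, n₀) ∈ T := by
  obtain ⟨harc, hnc, hmax⟩ := hT
  refine hmax (m₀, n₀) h fun a ha hcross => ?_
  rcases hcross with ⟨hm₀a, ha₁, ha₂⟩ | ⟨ha₁, hm₀a, ha₂⟩
  · obtain ⟨p, hp, hap⟩ := hr.exists_arc_gt harc a.2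
    exact hnc (n₀, p) hp a ha (Or.inr ⟨ha₁, ha₂, hap⟩)
  · obtain ⟨m, hm, hma⟩ := hl.exists_arc_lt harc a.1
    exact hnc (m, m₀) hm a ha (Or.inl ⟨hma, ha₁, hm₀a⟩)
end

section
/- If a triangulation T of the infinity-gon is not locally finite, then T has a right-fountain or a left-fountain, i.e., there is an integer n such that infinitely many arcs of T share n as a common left endpoint or as a common right endpoint. -/
/-- T is locally finite: each integer is an endpoint of only finitely many arcs of T. -/
def LocallyFinite' (T : Set (ℤ × ℤ)) : Prop :=
  ∀ k : ℤ, {a ∈ T | a.1 = k ∨ a.2 = k}.Finite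


theorem Set.Infinite.fiber_fst_or_fiber_snd {α : Type*} {S : Set (α × α)} {k : α}
    (h : {a ∈ S | a.1 = k ∨ a.2 = k}.Infinite) :
    {p | (k, p) ∈ S}.Infinite ∨ {m | (m, k) ∈ S}.Infinite := by
  by_contra! hfin
  obtain ⟨hright, hleft⟩ := hfin
  refine h (((hright.image (Prod.mk k)).union (hleft.image (·, k))).subset ?_)
  rintro ⟨m, p⟩ ⟨hS, rfl | rfl⟩
  · exact Or.inl ⟨p, hS, rfl⟩
  · exact Or.inr ⟨m, hS, rfl⟩

theorem stmt7_general (T : Set (ℤ × ℤ)) (h : ¬ LocallyFinite' T) :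
    ∃ n : ℤ, RightFountain T n ∨ LeftFountain T n := by
  obtain ⟨k, hk⟩ := not_forall.mp h
  exact ⟨k, Set.Infinite.fiber_fst_or_fiber_snd hk⟩

theorem stmt7 (T : Set (ℤ × ℤ)) (hT : IsTriangulation T) (h : ¬ LocallyFinite' T) :
    ∃ n : ℤ, RightFountain T n ∨ LeftFountain T n :=
  stmt7_general T h
end

section
/- Let T be a triangulation of the infinity-gon and let (s,t) ∈ T. Then the set of arcs of T spanned by (s,t), together with the boundary segments of [s,t], forms a triangulation of the finite (t-s+1)-gon with vertices s, s+1, ..., t, i.e., a maximal set of pairwise non-crossing diagonals of that polygon. -/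
/-- A triangulation of the finite polygon with vertices s, s+1, …, t: a maximal set of
pairwise non-crossing diagonals (u,v) with s ≤ u, v ≤ t, v - u ≥ 2 and (u,v) ≠ (s,t). -/
def IsPolygonTriangulation (s t : ℤ) (S : Set (ℤ × ℤ)) : Prop :=
  (∀ a ∈ S, s ≤ a.1 ∧ a.1 + 2 ≤ a.2 ∧ a.2 ≤ t ∧ a ≠ (s, t)) ∧
  (∀ a ∈ S, ∀ b ∈ S, ¬ Cross a b) ∧
  (∀ γ : ℤ × ℤ, s ≤ γ.1 → γ.1 + 2 ≤ γ.2 → γ.2 ≤ t → γ ≠ (s, t) →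
    (∀ a ∈ S, ¬ Cross γ a) → γ ∈ S)

theorem stmt9 (T : Set (ℤ × ℤ)) (hT : IsTriangulation T) (s t : ℤ) (hst : (s, t) ∈ T) :
    IsPolygonTriangulation s t {a ∈ T | s ≤ a.1 ∧ a.2 ≤ t ∧ a ≠ (s, t)} := by
  obtain ⟨harc, hnc, hmax⟩ := hT
  refine ⟨?_, ?_, ?_⟩
  · rintro a ⟨ha, h1, h2, h3⟩
    exact ⟨h1, harc a ha, h2, h3⟩
  · rintro a ⟨ha, -⟩ b ⟨hb, -⟩
    exact hnc a ha b hb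
  · intro γ h1 h2 h3 h4 h5
    have hγT : γ ∈ T := by
      apply hmax γ h2
      intro a ha
      by_cases haS : s ≤ a.1 ∧ a.2 ≤ t ∧ a ≠ (s, t)
      · exact h5 a ⟨ha, haS⟩
      · intro hcross
        have h6 := hnc a ha (s, t) hst
        apply haS
        have hne : a ≠ (s, t) := by
          intro heq
          rw [heq] at hcross
          simp only [Cross] at hcross
          omega
        have hne' : ¬(a.1 = s ∧ a.2 = t) := by
          intro ⟨e1, e2⟩
          exact hne (Prod.ext e1 e2)
        simp only [Cross] at hcross h6
        refine ⟨?_, ?_, hne⟩ <;> omega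
    exact ⟨hγT, h1, h3, h4⟩
end

section
/- Let T be a triangulation of the infinity-gon with left-fountain m₀ and right-fountain n₀, n₀ - m₀ ≥ 2. Then the arc (m₀,n₀) is frozen: for every internal arc γ ≠ (m₀,n₀), the set (T \ {(m₀,n₀)}) ∪ {γ} is not a triangulation of the infinity-gon. -/
/- The arc (m₀, n₀) crosses no arc of any non-crossing set S with left-fountain m₀ and
right-fountain n₀: an arc crossing it from the right would cross the arcs (n₀, p) of S with p
far out to the right, and one crossing it from the left the arcs (m, m₀) of S with m far out to
the left. Replacing (m₀, n₀) in T by γ removes a single arc, so both fountains survive; if the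
result were a triangulation, maximality would put (m₀, n₀) back into it, forcing γ = (m₀, n₀). -/

section Fountains

variable {S : Set (ℤ × ℤ)} {n : ℤ}

lemma LeftFountain.exists_lt (hS : ∀ a ∈ S, IsArc a) (hl : LeftFountain S n) (c : ℤ) :
    ∃ m < c, (m, n) ∈ S := by
  have hbdd : BddAbove {m : ℤ | (m, n) ∈ S} :=
    ⟨n - 2, fun m hm => by have := hS _ hm; simp only [IsArc] at this; omega⟩
  obtain ⟨m, hm, hmc⟩ := not_bddBelow_iff.1 (fun hb => hl (hb.finite_of_bddAbove hbdd)) c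
  exact ⟨m, hmc, hm⟩

lemma RightFountain.exists_gt_s10 (hS : ∀ a ∈ S, IsArc a) (hr : RightFountain S n) (c : ℤ) :
    ∃ p > c, (n, p) ∈ S := by
  have hbdd : BddBelow {p : ℤ | (n, p) ∈ S} :=
    ⟨n + 2, fun p hp => by have := hS _ hp; simp only [IsArc] at this; omega⟩
  obtain ⟨p, hp, hpc⟩ := not_bddAbove_iff.1 (fun hb => hr (hbdd.finite_of_bddAbove hb)) c
  exact ⟨p, hpc, hp⟩

lemma LeftFountain.of_diff_singleton_subset {S' : Set (ℤ × ℤ)} {a : ℤ × ℤ}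
    (hl : LeftFountain S n) (hS' : S \ {a} ⊆ S') : LeftFountain S' n :=
  (hl.sdiff (Set.finite_singleton a.1)).mono fun _ hm =>
    hS' ⟨hm.1, fun h => hm.2 (congrArg Prod.fst h)⟩

lemma RightFountain.of_diff_singleton_subset {S' : Set (ℤ × ℤ)} {a : ℤ × ℤ}
    (hr : RightFountain S n) (hS' : S \ {a} ⊆ S') : RightFountain S' n :=
  (hr.sdiff (Set.finite_singleton a.2)).mono fun _ hp =>
    hS' ⟨hp.1, fun h => hp.2 (congrArg Prod.snd h)⟩

end Fountains

lemma IsTriangulation.mem_of_leftFountain_of_rightFountain {S : Set (ℤ × ℤ)} (hS : IsTriangulation S) {m₀ n₀ : ℤ}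
    (hl : LeftFountain S m₀) (hr : RightFountain S n₀) (h : m₀ + 2 ≤ n₀) : (m₀, n₀) ∈ S := by
  obtain ⟨hArc, hNC, hMax⟩ := hS
  refine hMax (m₀, n₀) h fun a ha => ?_
  rintro (⟨-, hn₀, hright⟩ | ⟨hleft, hm₀, -⟩)
  · obtain ⟨p, hp, hpS⟩ := hr.exists_gt_s10 hArc a.2
    exact hNC a ha (n₀, p) hpS (Or.inl ⟨hn₀, hright, hp⟩)
  · obtain ⟨m, hm, hmS⟩ := hl.exists_lt hArc a.1
    exact hNC a ha (m, m₀) hmS (Or.inr ⟨hm, hleft, hm₀⟩)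

theorem stmt10_general (T : Set (ℤ × ℤ)) (m₀ n₀ : ℤ)
    (hl : LeftFountain T m₀) (hr : RightFountain T n₀) (h : m₀ + 2 ≤ n₀) :
    ∀ γ : ℤ × ℤ, IsArc γ → γ ≠ (m₀, n₀) →
      ¬ IsTriangulation ((T \ {(m₀, n₀)}) ∪ {γ}) := by
  intro γ _ hne hT'
  have hsub : T \ {(m₀, n₀)} ⊆ (T \ {(m₀, n₀)}) ∪ {γ} := Set.subset_union_left
  rcases hT'.mem_of_leftFountain_of_rightFountain (hl.of_diff_singleton_subset hsub)
    (hr.of_diff_singleton_subset hsub) h with ⟨-, hne'⟩ | hγ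
  · exact hne' rfl
  · exact hne (Set.mem_singleton_iff.1 hγ).symm

theorem stmt10 (T : Set (ℤ × ℤ)) (hT : IsTriangulation T) (m₀ n₀ : ℤ)
    (hl : LeftFountain T m₀) (hr : RightFountain T n₀) (h : m₀ + 2 ≤ n₀) :
    ∀ γ : ℤ × ℤ, IsArc γ → γ ≠ (m₀, n₀) →
      ¬ IsTriangulation ((T \ {(m₀, n₀)}) ∪ {γ}) :=
  stmt10_general T m₀ n₀ hl hr h
end

section
/- Any triangulation of the infinity-gon has at most one frozen arc. -/
/-- An arc τ of a triangulation T is frozen if no other internal arc γ gives a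
triangulation (T \ {τ}) ∪ {γ}. -/
def IsFrozen (T : Set (ℤ × ℤ)) (τ : ℤ × ℤ) : Prop :=
  τ ∈ T ∧ ¬ ∃ γ : ℤ × ℤ, IsArc γ ∧ γ ≠ τ ∧ IsTriangulation ((T \ {τ}) ∪ {γ})

/-- Sides of triangles of `T`: its arcs and the boundary edges `(k, k + 1)`. -/
def IsEdge (T : Set (ℤ × ℤ)) (a : ℤ × ℤ) : Prop := a ∈ T ∨ a.2 = a.1 + 1

theorem Cross.symm {a b : ℤ × ℤ} (h : Cross a b) : Cross b a := by
  unfold Cross at *; omega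

theorem not_cross_of_isEdge {S : Set (ℤ × ℤ)} {γ a : ℤ × ℤ} (hγ : ∀ b ∈ S, ¬ Cross γ b)
    (ha : IsEdge S a) : ¬ Cross γ a := by
  rcases ha with ha | ha
  · exact hγ a ha
  · unfold Cross; omega

theorem eq_of_cross_diagonal {S : Set (ℤ × ℤ)} {w x y z : ℤ} {γ d d' : ℤ × ℤ}
    (hwx : w < x) (hxy : x < y) (hyz : y < z)
    (hd : d = (w, y) ∧ d' = (x, z) ∨ d = (x, z) ∧ d' = (w, y))
    (e₁ : IsEdge S (w, x)) (e₂ : IsEdge S (x, y)) (e₃ : IsEdge S (y, z)) (e₄ : IsEdge S (w, z))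
    (hγS : ∀ b ∈ S, ¬ Cross γ b) (hγ : Cross γ d) : γ = d' := by
  have h₁ := not_cross_of_isEdge hγS e₁
  have h₂ := not_cross_of_isEdge hγS e₂
  have h₃ := not_cross_of_isEdge hγS e₃
  have h₄ := not_cross_of_isEdge hγS e₄
  obtain ⟨p, q⟩ := γ
  rcases hd with ⟨rfl, rfl⟩ | ⟨rfl, rfl⟩ <;> simp only [Cross, Prod.mk.injEq] at * <;> omega

namespace IsTriangulation

variable {T : Set (ℤ × ℤ)}

theorem flip (hT : IsTriangulation T) {w x y z : ℤ} {d d' : ℤ × ℤ} (hwx : w < x) (hxy : x < y)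
    (hyz : y < z) (hd : d = (w, y) ∧ d' = (x, z) ∨ d = (x, z) ∧ d' = (w, y)) (hdT : d ∈ T)
    (e₁ : IsEdge T (w, x)) (e₂ : IsEdge T (x, y)) (e₃ : IsEdge T (y, z)) (e₄ : IsEdge T (w, z)) :
    IsTriangulation ((T \ {d}) ∪ {d'}) := by
  have hd' : d' = (w, y) ∧ d = (x, z) ∨ d' = (x, z) ∧ d = (w, y) := by tauto
  have hcross : Cross d d' := by
    rcases hd with ⟨rfl, rfl⟩ | ⟨rfl, rfl⟩ <;> unfold Cross <;> omega
  have hside : ∀ {s : ℤ × ℤ}, IsEdge T s → s ≠ d → IsEdge ((T \ {d}) ∪ {d'}) s :=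
    fun hs hne => hs.imp_left fun hs => Or.inl ⟨hs, hne⟩
  obtain ⟨n₁, n₂, n₃, n₄⟩ : (w, x) ≠ d ∧ (x, y) ≠ d ∧ (y, z) ≠ d ∧ (w, z) ≠ d := by
    rcases hd with ⟨rfl, -⟩ | ⟨rfl, -⟩ <;> simp only [ne_eq, Prod.mk.injEq] <;> omega
  refine ⟨?_, ?_, ?_⟩
  · rintro b (⟨hb, -⟩ | rfl)
    · exact hT.1 b hb
    · rcases hd with ⟨-, rfl⟩ | ⟨-, rfl⟩ <;> (unfold IsArc; dsimp only; omega)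
  · have key : ∀ b ∈ T, b ≠ d → ¬ Cross b d' := fun b hb hbd hc =>
      hbd (eq_of_cross_diagonal hwx hxy hyz hd' e₁ e₂ e₃ e₄ (hT.2.1 b hb) hc)
    rintro b (⟨hb, hbd⟩ | rfl) c (⟨hc, hcd⟩ | rfl)
    · exact hT.2.1 b hb c hc
    · exact key b hb hbd
    · exact fun h => key c hc hcd h.symm
    · unfold Cross; omega
  · intro γ hγ hγT'
    by_cases hγd : Cross γ d
    · exact Or.inr (eq_of_cross_diagonal hwx hxy hyz hd (hside e₁ n₁) (hside e₂ n₂)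
        (hside e₃ n₃) (hside e₄ n₄) hγT' hγd)
    · refine Or.inl ⟨hT.2.2 γ hγ fun b hb => ?_, ?_⟩
      · by_cases hbd : b = d
        · exact hbd ▸ hγd
        · exact hγT' b (Or.inl ⟨hb, hbd⟩)
      · rintro rfl
        exact hγT' d' (Or.inr rfl) hcross

theorem not_isFrozen_of_flip (hT : IsTriangulation T) {w x y z : ℤ} {d d' : ℤ × ℤ} (hwx : w < x)
    (hxy : x < y) (hyz : y < z) (hd : d = (w, y) ∧ d' = (x, z) ∨ d = (x, z) ∧ d' = (w, y))
    (e₁ : IsEdge T (w, x)) (e₂ : IsEdge T (x, y)) (e₃ : IsEdge T (y, z)) (e₄ : IsEdge T (w, z)) :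
    ¬ IsFrozen T d := by
  rintro ⟨hdT, hfrozen⟩
  refine hfrozen ⟨d', ?_, ?_, hT.flip hwx hxy hyz hd hdT e₁ e₂ e₃ e₄⟩ <;>
    rcases hd with ⟨rfl, rfl⟩ | ⟨rfl, rfl⟩ <;> simp only [IsArc, ne_eq, Prod.mk.injEq] <;> omega

theorem exists_apex_inside (hT : IsTriangulation T) {m n : ℤ} (h : (m, n) ∈ T) :
    ∃ a, m < a ∧ a < n ∧ IsEdge T (m, a) ∧ IsEdge T (a, n) := by
  have hmn : m + 2 ≤ n := hT.1 _ h
  obtain ⟨a, ⟨hma, han, hedge⟩, hmax⟩ := Int.exists_greatest_of_bdd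
    (P := fun a => m < a ∧ a < n ∧ IsEdge T (m, a)) ⟨n, fun _ h => h.2.1.le⟩
    ⟨m + 1, by omega, by omega, Or.inr rfl⟩
  refine ⟨a, hma, han, hedge, ?_⟩
  by_cases hlast : n = a + 1
  · exact Or.inr hlast
  refine Or.inl (hT.2.2 (a, n) (show a + 2 ≤ n by omega) fun ⟨p, q⟩ hpq hcross => ?_)
  have h₁ := hT.2.1 _ hpq _ h
  have h₂ := not_cross_of_isEdge (hT.2.1 _ hpq) hedge
  unfold Cross at hcross h₁ h₂
  have h₃ : p = m → q ≤ a := fun hp => hmax q ⟨by omega, by omega, Or.inl (hp ▸ hpq)⟩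
  omega

theorem exists_apex_outside (hT : IsTriangulation T) {m n p q : ℤ} (h : (m, n) ∈ T)
    (hpq : (p, q) ∈ T) (hp : p ≤ m) (hq : n ≤ q) (hne : (p, q) ≠ (m, n)) :
    ∃ v, (v < m ∧ IsEdge T (v, m) ∧ (v, n) ∈ T) ∨ (n < v ∧ (m, v) ∈ T ∧ IsEdge T (n, v)) := by
  have hmn : m + 2 ≤ n := hT.1 _ h
  induction hw : (q - p).toNat using Nat.strong_induction_on generalizing p q with
  | _ w ih =>
    obtain ⟨a, hpa, haq, hedge₁, hedge₂⟩ := hT.exists_apex_inside hpq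
    by_cases ham : a ≤ m
    · by_cases hcoinc : (a, q) = (m, n)
      · obtain ⟨rfl, rfl⟩ := Prod.mk.inj hcoinc
        exact ⟨p, Or.inl ⟨by omega, hedge₁, hpq⟩⟩
      · exact ih _ (by omega) (hedge₂.resolve_right (by omega)) ham hq hcoinc rfl
    by_cases han : n ≤ a
    · by_cases hcoinc : (p, a) = (m, n)
      · obtain ⟨rfl, rfl⟩ := Prod.mk.inj hcoinc
        exact ⟨q, Or.inr ⟨by omega, hpq, hedge₂⟩⟩
      · exact ih _ (by omega) (hedge₁.resolve_right (by omega)) hp han hcoinc rfl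
    -- an apex strictly between `m` and `n` would put a crossing side on `(m, n)`
    have h₁ := not_cross_of_isEdge (hT.2.1 _ h) hedge₁
    have h₂ := not_cross_of_isEdge (hT.2.1 _ h) hedge₂
    have h₃ : ¬ (p = m ∧ q = n) := fun ⟨rfl, rfl⟩ => hne rfl
    unfold Cross at h₁ h₂
    omega

theorem eq_of_isFrozen_of_encloses (hT : IsTriangulation T) {m n p q : ℤ}
    (hf : IsFrozen T (m, n)) (hpq : (p, q) ∈ T) (hp : p ≤ m) (hq : n ≤ q) : (p, q) = (m, n) := by
  by_contra hne
  obtain ⟨a, hma, han, hedge₁, hedge₂⟩ := hT.exists_apex_inside hf.1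
  obtain ⟨v, ⟨hvm, hedge₃, hvn⟩ | ⟨hnv, hmv, hedge₃⟩⟩ :=
    hT.exists_apex_outside hf.1 hpq hp hq hne
  · exact hT.not_isFrozen_of_flip hvm hma han (.inr ⟨rfl, rfl⟩) hedge₃ hedge₁ hedge₂ (.inl hvn) hf
  · exact hT.not_isFrozen_of_flip hma han hnv (.inl ⟨rfl, rfl⟩) hedge₁ hedge₂ hedge₃ (.inl hmv) hf

theorem exists_arc_over_of_isFrozen (hT : IsTriangulation T) {m n x : ℤ}
    (hf : IsFrozen T (m, n)) (hx : x < m) : ∃ p q, (p, q) ∈ T ∧ p < x ∧ x < q ∧ q ≤ m := by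
  have hmn : m + 2 ≤ n := hT.1 _ hf.1
  have hxn : (x, n) ∉ T := fun h => by
    have := hT.eq_of_isFrozen_of_encloses hf h hx.le le_rfl
    simp only [Prod.mk.injEq] at this
    omega
  obtain ⟨⟨p, q⟩, hpq, hcross⟩ : ∃ b ∈ T, Cross (x, n) b := by
    by_contra! h
    exact hxn (hT.2.2 _ (show x + 2 ≤ n by omega) h)
  have h₁ := hT.2.1 _ hpq _ hf.1
  have h₂ : p ≤ m → n ≤ q → p = m ∧ q = n := fun hp hq => by
    simpa using hT.eq_of_isFrozen_of_encloses hf hpq hp hq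
  unfold Cross at hcross h₁
  exact ⟨p, q, hpq, by omega⟩

theorem leftFountain_iff (hT : IsTriangulation T) {n : ℤ} :
    LeftFountain T n ↔ ∀ b, ∃ p < b, (p, n) ∈ T := by
  refine ⟨fun hinf b => ?_, fun h => Set.infinite_of_not_bddBelow ?_⟩
  · by_contra! hb
    refine hinf ((Set.finite_Icc b n).subset fun p (hp : (p, n) ∈ T) => ?_)
    have : p + 2 ≤ n := hT.1 _ hp
    exact ⟨not_lt.mp fun hpb => hb p hpb hp, by omega⟩
  · rintro ⟨b, hb⟩
    obtain ⟨p, hpb, hp⟩ := h b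
    exact (hb hp).not_gt hpb

theorem leftFountain_of_forall_exists_arc_over (hT : IsTriangulation T) {m : ℤ}
    (h : ∀ x < m, ∃ p q, (p, q) ∈ T ∧ p < x ∧ x < q ∧ q ≤ m) : LeftFountain T m := by
  refine hT.leftFountain_iff.mpr fun b => ?_
  obtain ⟨p₀, q₀, h₀⟩ := h (min b m - 1) (by omega)
  obtain ⟨q, ⟨p, hpq, hpx, hxq, hqm⟩, hmax⟩ := Int.exists_greatest_of_bdd
    (P := fun q => ∃ p, (p, q) ∈ T ∧ p < min b m - 1 ∧ min b m - 1 < q ∧ q ≤ m)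
    ⟨m, fun _ ⟨_, _, _, _, h⟩ => h⟩ ⟨q₀, p₀, h₀⟩
  obtain rfl | hqm := hqm.eq_or_lt
  · exact ⟨p, by omega, hpq⟩
  obtain ⟨p', q', hpq', hp'q, hqq', hq'm⟩ := h q hqm
  have hnc := hT.2.1 _ hpq _ hpq'
  unfold Cross at hnc
  have := hmax q' ⟨p', hpq', by omega, by omega, hq'm⟩
  omega

theorem leftFountain_unique (hT : IsTriangulation T) {n₁ n₂ : ℤ} (h₁ : LeftFountain T n₁)
    (h₂ : LeftFountain T n₂) : n₁ = n₂ := by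
  wlog hlt : n₁ < n₂ generalizing n₁ n₂
  · rcases (not_lt.mp hlt).eq_or_lt with h | h
    · exact h.symm
    · exact (this h₂ h₁ h).symm
  obtain ⟨p₂, hp₂, hp₂T⟩ := (hT.leftFountain_iff.mp h₂) n₁
  obtain ⟨p₁, hp₁, hp₁T⟩ := (hT.leftFountain_iff.mp h₁) p₂
  exact absurd (hT.2.1 _ hp₁T _ hp₂T) (by unfold Cross; omega)

theorem leftFountain_of_isFrozen (hT : IsTriangulation T) {m n : ℤ} (hf : IsFrozen T (m, n)) :
    LeftFountain T m :=
  hT.leftFountain_of_forall_exists_arc_over fun _ hx => hT.exists_arc_over_of_isFrozen hf hx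

end IsTriangulation

def reflectArc (a : ℤ × ℤ) : ℤ × ℤ := (-a.2, -a.1)

theorem reflectArc_involutive : Function.Involutive reflectArc := fun a => by
  simp [reflectArc]

theorem isArc_reflectArc {a : ℤ × ℤ} : IsArc (reflectArc a) ↔ IsArc a := by
  unfold IsArc reflectArc; omega

theorem cross_reflectArc {a b : ℤ × ℤ} : Cross (reflectArc a) (reflectArc b) ↔ Cross a b := by
  unfold Cross reflectArc; omega

section Reflection

variable {T : Set (ℤ × ℤ)}

theorem IsTriangulation.preimage_reflectArc (hT : IsTriangulation T) :
    IsTriangulation (reflectArc ⁻¹' T) := by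
  refine ⟨fun a ha => isArc_reflectArc.mp (hT.1 _ ha),
    fun a ha b hb => cross_reflectArc.not.mp (hT.2.1 _ ha _ hb), fun γ hγ hγT => ?_⟩
  refine hT.2.2 _ (isArc_reflectArc.mpr hγ) fun b hb => ?_
  rw [← reflectArc_involutive b, cross_reflectArc]
  exact hγT _ (by rwa [Set.mem_preimage, reflectArc_involutive])

theorem IsFrozen.preimage_reflectArc {τ : ℤ × ℤ} (hf : IsFrozen T τ) :
    IsFrozen (reflectArc ⁻¹' T) (reflectArc τ) := by
  refine ⟨by rw [Set.mem_preimage, reflectArc_involutive]; exact hf.1, ?_⟩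
  rintro ⟨γ, hγ, hγτ, hflip⟩
  refine hf.2 ⟨reflectArc γ, isArc_reflectArc.mpr hγ, fun h => hγτ ?_, ?_⟩
  · rw [← h, reflectArc_involutive]
  · convert hflip.preimage_reflectArc using 1
    ext a
    simp [reflectArc_involutive.eq_iff, reflectArc_involutive _]

theorem leftFountain_preimage_reflectArc_iff {n : ℤ} :
    LeftFountain (reflectArc ⁻¹' T) (-n) ↔ RightFountain T n := by
  have : {m : ℤ | (m, -n) ∈ reflectArc ⁻¹' T} = -{p | (n, p) ∈ T} := by
    ext; simp [reflectArc]
  rw [LeftFountain, RightFountain, this, Set.infinite_neg]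

theorem IsTriangulation.rightFountain_of_isFrozen (hT : IsTriangulation T) {m n : ℤ}
    (hf : IsFrozen T (m, n)) : RightFountain T n :=
  leftFountain_preimage_reflectArc_iff.mp
    (hT.preimage_reflectArc.leftFountain_of_isFrozen hf.preimage_reflectArc)

theorem IsTriangulation.rightFountain_unique (hT : IsTriangulation T) {m₁ m₂ : ℤ}
    (h₁ : RightFountain T m₁) (h₂ : RightFountain T m₂) : m₁ = m₂ :=
  neg_injective <| hT.preimage_reflectArc.leftFountain_unique
    (leftFountain_preimage_reflectArc_iff.mpr h₁) (leftFountain_preimage_reflectArc_iff.mpr h₂)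

end Reflection

theorem stmt11 (T : Set (ℤ × ℤ)) (hT : IsTriangulation T) :
    ∀ τ τ' : ℤ × ℤ, IsFrozen T τ → IsFrozen T τ' → τ = τ' := by
  rintro ⟨m, n⟩ ⟨m', n'⟩ hτ hτ'
  rw [Prod.mk.injEq]
  exact ⟨hT.leftFountain_unique (hT.leftFountain_of_isFrozen hτ) (hT.leftFountain_of_isFrozen hτ'),
    hT.rightFountain_unique (hT.rightFountain_of_isFrozen hτ) (hT.rightFountain_of_isFrozen hτ')⟩
end

section
/- Let T be a triangulation of the infinity-gon with a fountain at vertex a (i.e., a is both a left-fountain and a right-fountain). Then for every integer N > 0 there exist arcs (m, a) ∈ T with m < a - N and arcs (a, n) ∈ T with n > a + N; moreover, no arc (p,q) ∈ T satisfies p < a < q except possibly arcs incident to a itself — formally, every arc (p,q) ∈ T with p < a < q does not exist (any arc of T either has both endpoints ≤ a or both endpoints ≥ a). -/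
section Fountain

variable {T : Set (ℤ × ℤ)} {a : ℤ}

theorem LeftFountain.not_bddBelow (harc : ∀ b ∈ T, IsArc b) (hl : LeftFountain T a) :
    ¬ BddBelow {m : ℤ | (m, a) ∈ T} := fun hbdd =>
  hl (hbdd.finite_of_bddAbove ⟨a - 2, fun m hm => by have : m + 2 ≤ a := harc _ hm; omega⟩)

theorem RightFountain.not_bddAbove (harc : ∀ b ∈ T, IsArc b) (hr : RightFountain T a) :
    ¬ BddAbove {n : ℤ | (a, n) ∈ T} := fun hbdd =>
  hr (BddBelow.finite_of_bddAbove ⟨a + 2, fun n hn => by have : a + 2 ≤ n := harc _ hn; omega⟩ hbdd)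

/-- An arc (p, q) with p < a < q would cross every arc (m, a) with m < p. -/
theorem LeftFountain.not_straddled (harc : ∀ b ∈ T, IsArc b) (hnc : ∀ b ∈ T, ∀ c ∈ T, ¬ Cross b c)
    (hl : LeftFountain T a) {b : ℤ × ℤ} (hb : b ∈ T) : ¬ (b.1 < a ∧ a < b.2) := by
  rintro ⟨hpa, haq⟩
  obtain ⟨m, hm, hmp⟩ := not_bddBelow_iff.mp (hl.not_bddBelow harc) b.1
  exact hnc _ hm _ hb (Or.inl ⟨hmp, hpa, haq⟩)

end Fountain

theorem stmt18 (T : Set (ℤ × ℤ)) (hT : IsTriangulation T) (a : ℤ)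
    (hl : LeftFountain T a) (hr : RightFountain T a) :
    (∀ N : ℤ, 0 < N → (∃ m, (m, a) ∈ T ∧ m < a - N) ∧ (∃ n, (a, n) ∈ T ∧ a + N < n)) ∧
    (∀ b ∈ T, ¬ (b.1 < a ∧ a < b.2)) := by
  obtain ⟨harc, hnc, -⟩ := hT
  refine ⟨fun N _ => ⟨?_, ?_⟩, fun b hb => hl.not_straddled harc hnc hb⟩
  · exact not_bddBelow_iff.mp (hl.not_bddBelow harc) (a - N)
  · exact not_bddAbove_iff.mp (hr.not_bddAbove harc) (a + N)
end
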